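/- The sawtooth function h̃ : ℝ → ℝ given by h̃(x) = max{0, x} + Σ_{i=1}^{p-1} (-1)^i · 2 · max{0, x - i} identifies the p intervals (0,1), (1,2), ..., (p-1,p): the image of each open interval (k-1, k) under h̃ equals the open interval (0, 1), for every k ∈ {1, ..., p}. -/

import Mathlib

/-- The sawtooth function built from rectifier (ReLU) units:
`h̃(x) = max{0,x} + ∑_{i=1}^{p-1} (-1)^i · 2 · max{0, x - i}`. -/
noncomputable def sawtooth (p : ℕ) (x : ℝ) : ℝ :=
  max 0 x + ∑ i ∈ Finset.Icc 1 (p - 1), (-1 : ℝ) ^ i * 2 * max 0 (x - i)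

/-!
On `[m, m + 1]` exactly the units `max 0 x` and `max 0 (x - i)`, `1 ≤ i ≤ m`, are active, so
`sawtooth p` is affine there; the alternating slopes `1, -1, 1, …` make it `x - m` for even `m`
and `m + 1 - x` for odd `m`. Either way it maps `(m, m + 1)` bijectively onto `(0, 1)`.
-/

open Finset

lemma add_sum_alternating_sub (m : ℕ) (x : ℝ) :
    x + ∑ i ∈ Icc 1 m, (-1 : ℝ) ^ i * 2 * (x - i) = if Even m then x - m else m + 1 - x := by
  induction m with
  | zero => simp
  | succ n ih =>
    rw [sum_Icc_succ_top (Nat.le_add_left 1 n), ← add_assoc, ih]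
    rcases Nat.even_or_odd n with hn | hn
    · rw [if_pos hn, if_neg (Nat.not_even_iff_odd.mpr hn.add_one), hn.add_one.neg_one_pow]
      push_cast
      ring
    · rw [if_neg (Nat.not_even_iff_odd.mpr hn), if_pos hn.add_one, hn.add_one.neg_one_pow]
      push_cast
      ring

lemma sawtooth_eq_of_mem_Icc {p m : ℕ} (hm : m < p) {x : ℝ} (hx : x ∈ Set.Icc (m : ℝ) (m + 1)) :
    sawtooth p x = if Even m then x - m else m + 1 - x := by
  obtain ⟨hmx, hxm⟩ := hx
  have hactive : ∑ i ∈ Icc 1 (p - 1), (-1 : ℝ) ^ i * 2 * max 0 (x - i) =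
      ∑ i ∈ Icc 1 m, (-1 : ℝ) ^ i * 2 * (x - i) := by
    symm
    apply sum_subset_zero_on_sdiff (Icc_subset_Icc_right (by omega))
    · intro i hi
      obtain ⟨hi₁, hi₂⟩ := mem_sdiff.mp hi
      have hmi : (m : ℝ) + 1 ≤ i := by
        exact_mod_cast (show m + 1 ≤ i by simp only [mem_Icc] at hi₁ hi₂; omega)
      rw [max_eq_left (by linarith), mul_zero]
    · intro i hi
      have him : (i : ℝ) ≤ m := by exact_mod_cast (mem_Icc.mp hi).2
      rw [max_eq_right (by linarith)]
  rw [sawtooth, max_eq_right ((Nat.cast_nonneg m).trans hmx), hactive, add_sum_alternating_sub]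

lemma image_sawtooth_Ioo {p m : ℕ} (hm : m < p) :
    sawtooth p '' Set.Ioo (m : ℝ) (m + 1) = Set.Ioo 0 1 := by
  have hformula : Set.EqOn (sawtooth p) (fun x => if Even m then x - m else m + 1 - x)
      (Set.Ioo (m : ℝ) (m + 1)) :=
    fun x hx => sawtooth_eq_of_mem_Icc hm (Set.Ioo_subset_Icc_self hx)
  rw [hformula.image_eq]
  split_ifs
  · simp [Set.image_sub_const_Ioo]
  · simp [Set.image_const_sub_Ioo]

theorem sawtooth_identifies_general (p : ℕ) (k : ℕ) (hk : 1 ≤ k) (hkp : k ≤ p) :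
    sawtooth p '' Set.Ioo ((k : ℝ) - 1) (k : ℝ) = Set.Ioo (0 : ℝ) 1 := by
  obtain ⟨m, rfl⟩ := Nat.exists_eq_add_of_le' hk
  push_cast
  simpa using image_sawtooth_Ioo (p := p) (m := m) (by omega)

/-- The sawtooth function identifies the `p` intervals `(0,1), (1,2), …, (p-1,p)`:
the image of each open interval `(k-1, k)` equals `(0,1)`. -/
theorem sawtooth_identifies (p : ℕ) (hp : 1 ≤ p) (k : ℕ) (hk : 1 ≤ k) (hkp : k ≤ p) :
    sawtooth p '' Set.Ioo ((k : ℝ) - 1) (k : ℝ) = Set.Ioo (0 : ℝ) 1 :=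
  sawtooth_identifies_general p k hk hkp
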